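/- Let v⁻, v⁺ ∈ ℝ³ satisfy |v⁻| < 1, |v⁺| < 1, and v⁻ ≠ v⁺. Define Δ(p) = v⁻/(|p| − p·v⁻) − v⁺/(|p| − p·v⁺) for p ≠ 0. Then the transverse part of Δ fails to be square integrable at high momentum: ∫_{|p| ≥ 1} |P(p)Δ(p)|² dp/(2|p|) = ∞. -/

import Mathlib

open MeasureTheory Complex

noncomputable section

abbrev E3 := EuclideanSpace ℝ (Fin 3)

/-- The transverse projection `P(p)v = v − (p·v/|p|²) p` on `ℝ³`. -/
def transProjR (p v : E3) : E3 := v - ((inner ℝ p v : ℝ) / ‖p‖^2) • p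

open scoped ENNReal

namespace JumpAux

def D (vm vp : E3) (p : E3) : E3 :=
  (‖p‖ - (inner ℝ p vm : ℝ))⁻¹ • vm - (‖p‖ - (inner ℝ p vp : ℝ))⁻¹ • vp

def g (vm vp : E3) (p : E3) : ℝ := ‖transProjR p (D vm vp p)‖^2 / (2 * ‖p‖)

lemma transProjR_smul_left (t : ℝ) (ht : t ≠ 0) (p w : E3) :
    transProjR (t • p) w = transProjR p w := by
  unfold transProjR
  congr 1
  rcases eq_or_ne p 0 with rfl | hp
  · simp
  · have hn : ‖p‖ ≠ 0 := norm_ne_zero_iff.mpr hp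
    rw [real_inner_smul_left, norm_smul, Real.norm_eq_abs, smul_smul, mul_pow, _root_.sq_abs]
    congr 1
    field_simp

lemma transProjR_smul_right (p : E3) (c : ℝ) (w : E3) :
    transProjR p (c • w) = c • transProjR p w := by
  unfold transProjR
  rw [real_inner_smul_right, smul_sub, smul_smul]
  congr 2
  ring

lemma D_smul (vm vp : E3) (t : ℝ) (ht : 0 < t) (p : E3) :
    D vm vp (t • p) = t⁻¹ • D vm vp p := by
  unfold D
  rw [norm_smul, real_inner_smul_left, real_inner_smul_left, Real.norm_eq_abs,
    abs_of_pos ht, smul_sub, smul_smul, smul_smul, ← mul_sub, ← mul_sub, mul_inv, mul_inv]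

lemma g_smul (vm vp : E3) (t : ℝ) (ht : 0 < t) (p : E3) :
    g vm vp (t • p) = t⁻¹^3 * g vm vp p := by
  unfold g
  rw [D_smul vm vp t ht, transProjR_smul_left t ht.ne', transProjR_smul_right,
    norm_smul, norm_smul, Real.norm_eq_abs, Real.norm_eq_abs, abs_of_pos ht,
    abs_of_pos (inv_pos.mpr ht)]
  ring


lemma measurable_F (vm vp : E3) : Measurable (fun p => ENNReal.ofReal (g vm vp p)) := by
  unfold g D transProjR
  apply Measurable.ennreal_ofReal
  have h1 : ∀ v : E3, Measurable (fun p : E3 => (inner ℝ p v : ℝ)) := fun v =>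
    (continuous_id.inner continuous_const).measurable
  have hD : Measurable (fun p : E3 => (‖p‖ - (inner ℝ p vm : ℝ))⁻¹ • vm
      - (‖p‖ - (inner ℝ p vp : ℝ))⁻¹ • vp) :=
    (((measurable_norm.sub (h1 vm)).inv.smul measurable_const).sub
      ((measurable_norm.sub (h1 vp)).inv.smul measurable_const))
  have h2 : Measurable (fun p : E3 => (inner ℝ p ((‖p‖ - (inner ℝ p vm : ℝ))⁻¹ • vm
      - (‖p‖ - (inner ℝ p vp : ℝ))⁻¹ • vp) : ℝ)) := measurable_id.inner hD
  exact (((hD.sub (((h2.div (measurable_norm.pow_const 2))).smul measurable_id)).norm.pow_const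
    2)).div (measurable_const.mul measurable_norm)

lemma denom_pos {v : E3} (hv : ‖v‖ < 1) {p : E3} (hp : p ≠ 0) :
    0 < ‖p‖ - (inner ℝ p v : ℝ) := by
  have h1 : (inner ℝ p v : ℝ) ≤ ‖p‖ * ‖v‖ := real_inner_le_norm p v
  have h2 : 0 < ‖p‖ := norm_pos_iff.mpr hp
  nlinarith

lemma continuousAt_g (vm vp : E3) (hvm : ‖vm‖ < 1) (hvp : ‖vp‖ < 1) {p₀ : E3}
    (hp : p₀ ≠ 0) : ContinuousAt (g vm vp) p₀ := by
  have hn : (0:ℝ) < ‖p₀‖ := norm_pos_iff.mpr hp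
  have hinner : ∀ v : E3, Continuous (fun p : E3 => (inner ℝ p v : ℝ)) := fun v =>
    continuous_id.inner continuous_const
  have hD : ContinuousAt (D vm vp) p₀ := by
    unfold D
    exact ((((continuous_norm.continuousAt.sub (hinner vm).continuousAt).inv₀
        (denom_pos hvm hp).ne').smul continuousAt_const).sub
      (((continuous_norm.continuousAt.sub (hinner vp).continuousAt).inv₀
        (denom_pos hvp hp).ne').smul continuousAt_const))
  have hPD : ContinuousAt (fun p => transProjR p (D vm vp p)) p₀ := by
    unfold transProjR
    exact (hD.sub ((((continuous_id.continuousAt.inner hD).div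
      ((continuous_norm.pow 2).continuousAt) (pow_ne_zero 2 hn.ne')).smul
      continuous_id.continuousAt)))
  unfold g
  exact (hPD.norm.pow 2).div ((continuous_const.mul continuous_norm).continuousAt)
    (by positivity)

lemma exists_orth (vm vp : E3) :
    ∃ p₀ : E3, ‖p₀‖ = 3/2 ∧ (inner ℝ p₀ vm : ℝ) = 0 ∧ (inner ℝ p₀ vp : ℝ) = 0 := by
  classical
  set K : Submodule ℝ E3 := Submodule.span ℝ {vm, vp} with hK
  have hfr : Module.finrank ℝ K ≤ 2 := by
    have h := finrank_span_le_card (R := ℝ) ({vm, vp} : Set E3)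
    refine h.trans ?_
    have : ({vm, vp} : Set E3).toFinset ⊆ {vm, vp} := by
      intro x hx
      simpa using Set.mem_toFinset.mp hx
    calc ({vm, vp} : Set E3).toFinset.card ≤ ({vm, vp} : Finset E3).card :=
          Finset.card_le_card this
      _ ≤ 2 := Finset.card_insert_le _ _ |>.trans (by simp)
  have hne : Kᗮ ≠ ⊥ := by
    intro h
    have hKtop : K = ⊤ := Submodule.orthogonal_eq_bot_iff.mp h
    have : Module.finrank ℝ K = 3 := by
      rw [hKtop]
      simpa [finrank_euclideanSpace_fin] using finrank_top ℝ E3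
    omega
  obtain ⟨x, hxK, hx0⟩ := Submodule.ne_bot_iff _ |>.mp hne
  have hxn : (0:ℝ) < ‖x‖ := norm_pos_iff.mpr hx0
  refine ⟨(3/2 * ‖x‖⁻¹) • x, ?_, ?_, ?_⟩
  · rw [norm_smul, Real.norm_eq_abs, abs_of_pos (by positivity)]
    field_simp
  · rw [real_inner_smul_left]
    have : (inner ℝ x vm : ℝ) = 0 := by
      have := Submodule.inner_right_of_mem_orthogonal
        (Submodule.subset_span (by simp : vm ∈ ({vm, vp} : Set E3))) hxK
      rwa [real_inner_comm] at this
    rw [this, mul_zero]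
  · rw [real_inner_smul_left]
    have : (inner ℝ x vp : ℝ) = 0 := by
      have := Submodule.inner_right_of_mem_orthogonal
        (Submodule.subset_span (by simp : vp ∈ ({vm, vp} : Set E3))) hxK
      rwa [real_inner_comm] at this
    rw [this, mul_zero]

lemma g_pos (vm vp : E3) (hne : vm ≠ vp) {p₀ : E3} (hn : ‖p₀‖ = 3/2)
    (h1 : (inner ℝ p₀ vm : ℝ) = 0) (h2 : (inner ℝ p₀ vp : ℝ) = 0) :
    0 < g vm vp p₀ := by
  have hDval : D vm vp p₀ = (3/2 : ℝ)⁻¹ • (vm - vp) := by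
    unfold D
    rw [h1, h2, hn, smul_sub]
    norm_num
  have hD0 : D vm vp p₀ ≠ 0 := by
    rw [hDval]
    simp only [ne_eq, smul_eq_zero, sub_eq_zero]
    push_neg
    exact ⟨by norm_num, hne⟩
  have hinnerD : (inner ℝ p₀ (D vm vp p₀) : ℝ) = 0 := by
    rw [hDval, real_inner_smul_right, inner_sub_right, h1, h2]
    ring
  have hP : transProjR p₀ (D vm vp p₀) = D vm vp p₀ := by
    unfold transProjR
    rw [hinnerD]
    simp
  unfold g
  rw [hP, hn]
  have : ‖D vm vp p₀‖ ≠ 0 := norm_ne_zero_iff.mpr hD0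
  positivity

end JumpAux

/-- for `|v⁻| < 1`, `|v⁺| < 1`, `v⁻ ≠ v⁺`, the transverse part of the jump
term `Δ(p) = v⁻/(|p| − p·v⁻) − v⁺/(|p| − p·v⁺)` is not square integrable over `|p| ≥ 1`
for the measure `dp/(2|p|)`. -/
theorem jump_term_not_sq_integrable_UV
    (vm vp : E3) (hvm : ‖vm‖ < 1) (hvp : ‖vp‖ < 1) (hne : vm ≠ vp)
    (Δ : E3 → E3)
    (hΔ : ∀ p : E3, Δ p = (‖p‖ - (inner ℝ p vm : ℝ))⁻¹ • vm
                        - (‖p‖ - (inner ℝ p vp : ℝ))⁻¹ • vp) :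
    ∫⁻ p : E3 in {p : E3 | 1 ≤ ‖p‖},
        ENNReal.ofReal (‖transProjR p (Δ p)‖^2 / (2 * ‖p‖)) = ⊤ := by
  classical
  set F : E3 → ℝ≥0∞ := fun p => ENNReal.ofReal (JumpAux.g vm vp p) with hF
  have hFmeas : Measurable F := JumpAux.measurable_F vm vp
  have hint : (fun p : E3 => ENNReal.ofReal (‖transProjR p (Δ p)‖^2 / (2 * ‖p‖))) = F := by
    funext p
    rw [hΔ p]
    rfl
  rw [show (∫⁻ p : E3 in {p : E3 | 1 ≤ ‖p‖},
      ENNReal.ofReal (‖transProjR p (Δ p)‖^2 / (2 * ‖p‖)))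
      = ∫⁻ p : E3 in {p : E3 | 1 ≤ ‖p‖}, F p from by rw [← hint]]
  set A : ℕ → Set E3 := fun k => {p : E3 | 2^k ≤ ‖p‖ ∧ ‖p‖ < 2^(k+1)} with hA
  have hAmeas : ∀ k, MeasurableSet (A k) := fun k =>
    (measurableSet_le measurable_const measurable_norm).inter
      (measurableSet_lt measurable_norm measurable_const)
  have hdisj : Pairwise (Function.onFun Disjoint A) := by
    intro i j hij
    wlog h : i < j generalizing i j
    · exact (this hij.symm (hij.lt_or_gt.resolve_left h)).symm
    rw [Function.onFun, Set.disjoint_left]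
    rintro p ⟨-, h2⟩ ⟨h3, -⟩
    have : (2:ℝ)^(i+1) ≤ (2:ℝ)^j := pow_le_pow_right₀ one_le_two h
    linarith
  have hunion : {p : E3 | 1 ≤ ‖p‖} = ⋃ k, A k := by
    ext p
    simp only [Set.mem_iUnion, hA, Set.mem_setOf_eq]
    constructor
    · intro h
      exact exists_nat_pow_near h one_lt_two
    · rintro ⟨k, h1, -⟩
      have : (1:ℝ) ≤ 2^k := by
        simpa using pow_le_pow_right₀ (one_le_two (α := ℝ)) (Nat.zero_le k)
      linarith
  have hscale : ∀ k : ℕ, ∫⁻ p in A k, F p = ∫⁻ p in A 0, F p := by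
    intro k
    have htpos : (0:ℝ) < 2^k := by positivity
    have hmap := MeasureTheory.Measure.map_addHaar_smul (volume : Measure E3) htpos.ne'
    simp only [finrank_euclideanSpace_fin] at hmap
    have hsmeas : Measurable (fun x : E3 => (2:ℝ)^k • x) := measurable_const_smul _
    have key := setLIntegral_map (μ := (volume : Measure E3)) (hAmeas k) hFmeas hsmeas
    rw [hmap, Measure.restrict_smul, lintegral_smul_measure] at key
    have hpre : (fun x : E3 => (2:ℝ)^k • x) ⁻¹' (A k) = A 0 := by
      ext x
      simp only [Set.mem_preimage, hA, Set.mem_setOf_eq, norm_smul, Real.norm_eq_abs,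
        abs_of_pos htpos, pow_zero, zero_add, pow_one, pow_succ, one_mul]
      rw [le_mul_iff_one_le_right htpos, mul_lt_mul_iff_right₀ htpos]
    rw [hpre] at key
    have hhom : ∀ x : E3, F ((2:ℝ)^k • x) = ENNReal.ofReal (((2:ℝ)^k)⁻¹^3) * F x := by
      intro x
      simp only [hF]
      rw [JumpAux.g_smul vm vp _ htpos, ENNReal.ofReal_mul (by positivity)]
    simp_rw [hhom] at key
    rw [lintegral_const_mul _ hFmeas] at key
    have habs : |(((2:ℝ)^k) ^ 3)⁻¹| = ((2:ℝ)^k)⁻¹^3 := by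
      rw [abs_of_pos (by positivity), inv_pow]
    rw [habs] at key
    exact (ENNReal.mul_right_inj
      (ENNReal.ofReal_pos.mpr (by positivity)).ne' ENNReal.ofReal_ne_top).mp key
  have hI : 0 < ∫⁻ p in A 0, F p := by
    obtain ⟨p₀, hn, h1, h2⟩ := JumpAux.exists_orth vm vp
    have hp₀ : p₀ ≠ 0 := by
      intro h; rw [h, norm_zero] at hn; norm_num at hn
    have hg := JumpAux.g_pos vm vp hne hn h1 h2
    have hcont := JumpAux.continuousAt_g vm vp hvm hvp hp₀
    have hev1 : (JumpAux.g vm vp) ⁻¹' (Set.Ioi (JumpAux.g vm vp p₀ / 2)) ∈ nhds p₀ :=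
      hcont (Ioi_mem_nhds (by linarith))
    have hev2 : {p : E3 | 1 < ‖p‖ ∧ ‖p‖ < 2} ∈ nhds p₀ := by
      refine IsOpen.mem_nhds ?_ ?_
      · exact (isOpen_lt continuous_const continuous_norm).inter
          (isOpen_lt continuous_norm continuous_const)
      · exact ⟨by rw [hn]; norm_num, by rw [hn]; norm_num⟩
    obtain ⟨ε, hε, hball⟩ := Metric.mem_nhds_iff.mp (Filter.inter_mem hev1 hev2)
    have hsub : Metric.ball p₀ ε ⊆ A 0 := by
      intro x hx
      obtain ⟨-, hx2⟩ := hball hx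
      simp only [hA, Set.mem_setOf_eq, pow_zero, zero_add, pow_one]
      exact ⟨hx2.1.le, hx2.2⟩
    have hlow : ∀ x ∈ Metric.ball p₀ ε, ENNReal.ofReal (JumpAux.g vm vp p₀ / 2) ≤ F x := by
      intro x hx
      obtain ⟨hx1, -⟩ := hball hx
      exact ENNReal.ofReal_le_ofReal (le_of_lt hx1)
    calc (0:ℝ≥0∞) < ENNReal.ofReal (JumpAux.g vm vp p₀ / 2) * volume (Metric.ball p₀ ε) := by
          apply ENNReal.mul_pos
          · exact (ENNReal.ofReal_pos.mpr (by linarith)).ne'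
          · exact (Metric.measure_ball_pos volume p₀ hε).ne'
      _ = ∫⁻ _ in Metric.ball p₀ ε, ENNReal.ofReal (JumpAux.g vm vp p₀ / 2) := by
          rw [setLIntegral_const]
      _ ≤ ∫⁻ x in Metric.ball p₀ ε, F x := setLIntegral_mono hFmeas hlow
      _ ≤ ∫⁻ x in A 0, F x := lintegral_mono_set hsub
  rw [hunion, lintegral_iUnion hAmeas hdisj, tsum_congr hscale]
  exact ENNReal.tsum_const_eq_top_of_ne_zero hI.ne'
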